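/- Positivity preservation of the feedback Riccati-type recursions under assumption (H): assume Q_{t,k}, Q_{t,k}+Q̄_{t,k}, G_t, G_t+Ḡ_t are positive semidefinite and R_{t,k}, R_{t,k}+R̄_{t,k} are positive definite for all t∈𝕋, k∈𝕋_t. Then the solutions of the tilded recursions satisfy: S̃_{k,ℓ} and 𝒮̃_{k,ℓ} are positive semidefinite for all k∈𝕋 and ℓ∈𝕋_k∪{N}, and 𝕆̃_k=ℛ_{k,k}+ℬ_{k,k}′𝒮̃_{k,k+1}ℬ_{k,k}+Σ_{i,j}δ_k^{ij}(𝒟^i_{k,k})′S̃_{k,k+1}𝒟^j_{k,k} is positive definite for all k∈𝕋. In particular, since Φ̃_ℓ=−𝕆̃_ℓ†𝕃̃_ℓ, the recursion for S̃ can equivalently be written in the completed-square form S̃_{k,ℓ}=Q_{k,ℓ}+𝕃̃_ℓ′𝕆̃_ℓ†R_{k,ℓ}𝕆̃_ℓ†𝕃̃_ℓ+(A_{k,ℓ}−B_{k,ℓ}𝕆̃_ℓ†𝕃̃_ℓ)′S̃_{k,ℓ+1}(A_{k,ℓ}−B_{k,ℓ}𝕆̃_ℓ†𝕃̃_ℓ)+Σ_{i,j}δ_ℓ^{ij}(C^i_{k,ℓ}−D^i_{k,ℓ}𝕆̃_ℓ†𝕃̃_ℓ)′S̃_{k,ℓ+1}(C^j_{k,ℓ}−D^j_{k,ℓ}𝕆̃_ℓ†𝕃̃_ℓ),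 and analogously for 𝒮̃ with calligraphic coefficients. -/

import Mathlib

open MeasureTheory Matrix Finset

noncomputable section

namespace TILQ

/-- `ℝ^d`, realized as functions `Fin d → ℝ`. -/
abbrev Vec (d : ℕ) : Type := Fin d → ℝ

/-- Real `a × b` matrices. -/
abbrev Mat (a b : ℕ) : Type := Matrix (Fin a) (Fin b) ℝ

/-- The four Penrose equations: `Md` is the Moore–Penrose pseudoinverse of `M`. -/
def IsMoorePenrose {a b : ℕ} (M : Mat a b) (Md : Mat b a) : Prop :=
  M * Md * M = M ∧ Md * M * Md = Md ∧ (M * Md)ᵀ = M * Md ∧ (Md * M)ᵀ = Md * M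

/-- Iteration of a time-dependent step map (used to encode forward difference equations). -/
def iter {α : Type*} (init : α) (step : ℕ → α → α) : ℕ → α
  | 0 => init
  | (j + 1) => step j (iter init step j)

/-- All the deterministic data of the time-inconsistent mean-field LQ problem. -/
structure LQData (n m p : ℕ) : Type where
  N : ℕ
  A : ℕ → ℕ → Mat n n
  Ab : ℕ → ℕ → Mat n n
  B : ℕ → ℕ → Mat n m
  Bb : ℕ → ℕ → Mat n m
  C : Fin p → ℕ → ℕ → Mat n n
  Cb : Fin p → ℕ → ℕ → Mat n n
  D : Fin p → ℕ → ℕ → Mat n m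
  Db : Fin p → ℕ → ℕ → Mat n m
  f : ℕ → ℕ → Vec n
  d : Fin p → ℕ → ℕ → Vec n
  Q : ℕ → ℕ → Mat n n
  Qb : ℕ → ℕ → Mat n n
  R : ℕ → ℕ → Mat m m
  Rb : ℕ → ℕ → Mat m m
  G : ℕ → Mat n n
  Gb : ℕ → Mat n n
  F : ℕ → Mat n n
  q : ℕ → ℕ → Vec n
  g : ℕ → Vec n
  ρ : ℕ → ℕ → Vec m
  Δ : ℕ → Matrix (Fin p) (Fin p) ℝ

namespace LQData

variable {n m p : ℕ} (P : LQData n m p)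

/-- `𝒜 = A + Ā`. -/
def cA (t k : ℕ) : Mat n n := P.A t k + P.Ab t k
/-- `ℬ = B + B̄`. -/
def cB (t k : ℕ) : Mat n m := P.B t k + P.Bb t k
/-- `𝒞^i = C^i + C̄^i`. -/
def cC (i : Fin p) (t k : ℕ) : Mat n n := P.C i t k + P.Cb i t k
/-- `𝒟^i = D^i + D̄^i`. -/
def cD (i : Fin p) (t k : ℕ) : Mat n m := P.D i t k + P.Db i t k
/-- `𝒬 = Q + Q̄`. -/
def cQ (t k : ℕ) : Mat n n := P.Q t k + P.Qb t k
/-- `ℛ = R + R̄`. -/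
def cR (t k : ℕ) : Mat m m := P.R t k + P.Rb t k
/-- `𝒢 = G + Ḡ`. -/
def cG (t : ℕ) : Mat n n := P.G t + P.Gb t

end LQData

/-!
Every matrix produced by the recursions is a sum of congruences `Mᵀ X M` of positive
semidefinite matrices, plus a noise term `∑ᵢⱼ δ^{ij} (Mᵢ)ᵀ S Mⱼ`; the latter is itself a
congruence of the Kronecker product `Δ ⊗ S`, hence positive semidefinite. Backward induction
from the terminal data `G`, `G + Ḡ` then gives `S̃, 𝒮̃ ⪰ 0`, so `𝕆̃ ⪰ ℛ ≻ 0`. An invertible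
matrix has its inverse as only Moore–Penrose pseudoinverse, so `𝕆̃†` is symmetric and the
completed-square form is `Φ̃ = -𝕆̃†𝕃̃` substituted into the recursions.
-/

open scoped Kronecker

section Congruence

variable {ι κ ν : Type*} [Fintype ι] [Fintype κ]

lemma posSemidef_transpose_mul_mul_same [Fintype ν] {S : Matrix κ κ ℝ} (hS : S.PosSemidef)
    (M : Matrix κ ν ℝ) : (Mᵀ * S * M).PosSemidef := by
  simpa only [conjTranspose_eq_transpose_of_trivial] using hS.conjTranspose_mul_mul_same M

lemma sum_smul_transpose_mul_mul_eq_kronecker (Δ : Matrix ι ι ℝ) (S : Matrix κ κ ℝ)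
    (M : ι → Matrix κ ν ℝ) :
    ∑ i, ∑ j, Δ i j • ((M i)ᵀ * S * M j)
      = (of fun x : ι × κ => M x.1 x.2)ᵀ * (Δ ⊗ₖ S) * of fun x : ι × κ => M x.1 x.2 := by
  ext c d
  simp only [Matrix.sum_apply, Matrix.smul_apply, smul_eq_mul, mul_apply, transpose_apply,
    of_apply, kroneckerMap_apply, Fintype.sum_prod_type, Finset.mul_sum, Finset.sum_mul]
  rw [Finset.sum_comm]
  refine Finset.sum_congr rfl fun j _ => ?_
  rw [Finset.sum_comm]
  exact Finset.sum_congr rfl fun _ _ => Finset.sum_congr rfl fun _ _ =>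
    Finset.sum_congr rfl fun _ _ => by ring

lemma posSemidef_sum_smul_transpose_mul_mul [Fintype ν] {Δ : Matrix ι ι ℝ} (hΔ : Δ.PosSemidef)
    {S : Matrix κ κ ℝ} (hS : S.PosSemidef) (M : ι → Matrix κ ν ℝ) :
    (∑ i, ∑ j, Δ i j • ((M i)ᵀ * S * M j)).PosSemidef := by
  rw [sum_smul_transpose_mul_mul_eq_kronecker]
  exact posSemidef_transpose_mul_mul_same (hΔ.kronecker hS) _

end Congruence

lemma IsMoorePenrose.eq_nonsing_inv {a : ℕ} {M Md : Mat a a} (h : IsMoorePenrose M Md)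
    (hM : IsUnit M.det) : Md = M⁻¹ := by
  refine (inv_eq_right_inv ?_).symm
  calc M * Md = M * Md * M * M⁻¹ := by rw [Matrix.mul_assoc _ M, mul_nonsing_inv _ hM, mul_one]
    _ = 1 := by rw [h.1, mul_nonsing_inv _ hM]

lemma IsMoorePenrose.transpose_eq_of_posDef {a : ℕ} {M Md : Mat a a} (h : IsMoorePenrose M Md)
    (hM : M.PosDef) : Mdᵀ = Md := by
  have hMT : Mᵀ = M := by
    simpa only [conjTranspose_eq_transpose_of_trivial] using hM.isHermitian.eq
  rw [h.eq_nonsing_inv hM.det_pos.ne'.isUnit, transpose_nonsing_inv, hMT]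

section Riccati

variable {n m p : ℕ}

/-- The right-hand side of the recursions: `S̃` uses `S' = S`, while `𝒮̃` uses `S' = S̃`. -/
def riccatiStep (Δ : Matrix (Fin p) (Fin p) ℝ) (Q : Mat n n) (R : Mat m m) (A : Mat n n)
    (B : Mat n m) (C : Fin p → Mat n n) (D : Fin p → Mat n m) (S S' : Mat n n)
    (Φ : Mat m n) : Mat n n :=
  Q + Φᵀ * R * Φ + (A + B * Φ)ᵀ * S * (A + B * Φ)
    + ∑ i, ∑ j, Δ i j • ((C i + D i * Φ)ᵀ * S' * (C j + D j * Φ))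

lemma riccatiStep_posSemidef {Δ : Matrix (Fin p) (Fin p) ℝ} {Q : Mat n n} {R : Mat m m}
    {S S' : Mat n n} (hΔ : Δ.PosSemidef) (hQ : Q.PosSemidef) (hR : R.PosSemidef)
    (hS : S.PosSemidef) (hS' : S'.PosSemidef) (A : Mat n n) (B : Mat n m)
    (C : Fin p → Mat n n) (D : Fin p → Mat n m) (Φ : Mat m n) :
    (riccatiStep Δ Q R A B C D S S' Φ).PosSemidef :=
  ((hQ.add (posSemidef_transpose_mul_mul_same hR Φ)).add
    (posSemidef_transpose_mul_mul_same hS _)).add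
    (posSemidef_sum_smul_transpose_mul_mul hΔ hS' _)

end Riccati

theorem tilde_recursion_positivity_general {n m p : ℕ} (P : LQData n m p)
    (hΔ : ∀ k, (P.Δ k).PosSemidef)
    (hH : ∀ t k, (P.Q t k).PosSemidef ∧ (P.cQ t k).PosSemidef ∧ (P.G t).PosSemidef ∧
      (P.cG t).PosSemidef ∧ (P.R t k).PosDef ∧ (P.cR t k).PosDef)
    (St Scalt Ut : ℕ → ℕ → Mat n n) (Obb Odag : ℕ → Mat m m) (Lt Φt : ℕ → Mat m n)
    (hMP : ∀ k, k < P.N → IsMoorePenrose (Obb k) (Odag k))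
    (hterm : ∀ k, k < P.N →
      St k P.N = P.G k ∧ Scalt k P.N = P.G k + P.Gb k ∧ Ut k P.N = P.F k)
    (hObb : ∀ l, l < P.N →
      Obb l = P.cR l l + (P.cB l l)ᵀ * Scalt l (l + 1) * P.cB l l
        + ∑ i : Fin p, ∑ j : Fin p,
            P.Δ l i j • ((P.cD i l l)ᵀ * St l (l + 1) * P.cD j l l))
    (hΦt : ∀ l, l < P.N → Φt l = -(Odag l * Lt l))
    (hSt : ∀ k l, k < P.N → k ≤ l → l < P.N →
      St k l = P.Q k l + (Φt l)ᵀ * P.R k l * Φt l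
        + (P.A k l + P.B k l * Φt l)ᵀ * St k (l + 1) * (P.A k l + P.B k l * Φt l)
        + ∑ i : Fin p, ∑ j : Fin p,
            P.Δ l i j • ((P.C i k l + P.D i k l * Φt l)ᵀ * St k (l + 1)
              * (P.C j k l + P.D j k l * Φt l)))
    (hScalt : ∀ k l, k < P.N → k ≤ l → l < P.N →
      Scalt k l = P.cQ k l + (Φt l)ᵀ * P.cR k l * Φt l
        + (P.cA k l + P.cB k l * Φt l)ᵀ * Scalt k (l + 1) * (P.cA k l + P.cB k l * Φt l)
        + ∑ i : Fin p, ∑ j : Fin p,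
            P.Δ l i j • ((P.cC i k l + P.cD i k l * Φt l)ᵀ * St k (l + 1)
              * (P.cC j k l + P.cD j k l * Φt l))) :
    (∀ k l, k < P.N → k ≤ l → l ≤ P.N → (St k l).PosSemidef ∧ (Scalt k l).PosSemidef) ∧
    (∀ k, k < P.N → (Obb k).PosDef) ∧
    (∀ k l, k < P.N → k ≤ l → l < P.N →
      St k l = P.Q k l + (Lt l)ᵀ * Odag l * P.R k l * Odag l * Lt l
        + (P.A k l - P.B k l * (Odag l * Lt l))ᵀ * St k (l + 1)
            * (P.A k l - P.B k l * (Odag l * Lt l))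
        + ∑ i : Fin p, ∑ j : Fin p,
            P.Δ l i j • ((P.C i k l - P.D i k l * (Odag l * Lt l))ᵀ * St k (l + 1)
              * (P.C j k l - P.D j k l * (Odag l * Lt l))) ∧
      Scalt k l = P.cQ k l + (Lt l)ᵀ * Odag l * P.cR k l * Odag l * Lt l
        + (P.cA k l - P.cB k l * (Odag l * Lt l))ᵀ * Scalt k (l + 1)
            * (P.cA k l - P.cB k l * (Odag l * Lt l))
        + ∑ i : Fin p, ∑ j : Fin p,
            P.Δ l i j • ((P.cC i k l - P.cD i k l * (Odag l * Lt l))ᵀ * St k (l + 1)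
              * (P.cC j k l - P.cD j k l * (Odag l * Lt l)))) := by
  have hPSD : ∀ k l, k < P.N → k ≤ l → l ≤ P.N →
      (St k l).PosSemidef ∧ (Scalt k l).PosSemidef := by
    intro k l hk hkl hlN
    refine Nat.decreasingInduction' (fun l' hl'N hll' ih => ?_) hlN ?_
    · obtain ⟨hQ, hcQ, -, -, hR, hcR⟩ := hH k l'
      rw [hSt k l' hk (hkl.trans hll') hl'N, hScalt k l' hk (hkl.trans hll') hl'N]
      exact ⟨riccatiStep_posSemidef (hΔ l') hQ hR.posSemidef ih.1 ih.1 _ _ _ _ _,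
        riccatiStep_posSemidef (hΔ l') hcQ hcR.posSemidef ih.2 ih.1 _ _ _ _ _⟩
    · obtain ⟨hG, hcG, -⟩ := hterm k hk
      exact ⟨hG ▸ (hH k k).2.2.1, hcG ▸ (hH k k).2.2.2.1⟩
  have hO : ∀ k, k < P.N → (Obb k).PosDef := fun k hk => by
    obtain ⟨hS, hcS⟩ := hPSD k (k + 1) hk k.le_succ hk
    rw [hObb k hk]
    exact ((hH k k).2.2.2.2.2.add_posSemidef
      (posSemidef_transpose_mul_mul_same hcS _)).add_posSemidef
      (posSemidef_sum_smul_transpose_mul_mul (hΔ k) hS _)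
  refine ⟨hPSD, hO, fun k l hk hkl hlN => ?_⟩
  have hT := (hMP l hlN).transpose_eq_of_posDef (hO l hlN)
  rw [hSt k l hk hkl hlN, hScalt k l hk hkl hlN, hΦt l hlN]
  constructor <;>
    simp only [transpose_neg, transpose_mul, Matrix.neg_mul, Matrix.mul_neg, neg_neg, hT,
      sub_eq_add_neg, Matrix.mul_assoc]

/-- Positivity preservation of the tilded (feedback) Riccati-type recursions under the
standard definiteness assumption (H), together with the completed-square form of the
recursions for `S̃` and `𝒮̃`. -/
theorem tilde_recursion_positivity {n m p : ℕ} (P : LQData n m p)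
    (hQsymm : ∀ t k, (P.Q t k).IsSymm ∧ (P.Qb t k).IsSymm ∧ (P.R t k).IsSymm ∧
      (P.Rb t k).IsSymm)
    (hGsymm : ∀ t, (P.G t).IsSymm ∧ (P.Gb t).IsSymm)
    (hΔ : ∀ k, (P.Δ k).PosSemidef)
    (hH : ∀ t k, (P.Q t k).PosSemidef ∧ (P.cQ t k).PosSemidef ∧ (P.G t).PosSemidef ∧
      (P.cG t).PosSemidef ∧ (P.R t k).PosDef ∧ (P.cR t k).PosDef)
    (St Scalt Ut : ℕ → ℕ → Mat n n) (Obb Odag : ℕ → Mat m m) (Lt Φt : ℕ → Mat m n)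
    (hMP : ∀ k, k < P.N → IsMoorePenrose (Obb k) (Odag k))
    (hterm : ∀ k, k < P.N →
      St k P.N = P.G k ∧ Scalt k P.N = P.G k + P.Gb k ∧ Ut k P.N = P.F k)
    (hObb : ∀ l, l < P.N →
      Obb l = P.cR l l + (P.cB l l)ᵀ * Scalt l (l + 1) * P.cB l l
        + ∑ i : Fin p, ∑ j : Fin p,
            P.Δ l i j • ((P.cD i l l)ᵀ * St l (l + 1) * P.cD j l l))
    (hLt : ∀ l, l < P.N →
      Lt l = (P.cB l l)ᵀ * Scalt l (l + 1) * P.cA l l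
        + (∑ i : Fin p, ∑ j : Fin p,
            P.Δ l i j • ((P.cD i l l)ᵀ * St l (l + 1) * P.cC j l l))
        + (P.cB l l)ᵀ * Ut l (l + 1))
    (hΦt : ∀ l, l < P.N → Φt l = -(Odag l * Lt l))
    (hSt : ∀ k l, k < P.N → k ≤ l → l < P.N →
      St k l = P.Q k l + (Φt l)ᵀ * P.R k l * Φt l
        + (P.A k l + P.B k l * Φt l)ᵀ * St k (l + 1) * (P.A k l + P.B k l * Φt l)
        + ∑ i : Fin p, ∑ j : Fin p,
            P.Δ l i j • ((P.C i k l + P.D i k l * Φt l)ᵀ * St k (l + 1)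
              * (P.C j k l + P.D j k l * Φt l)))
    (hScalt : ∀ k l, k < P.N → k ≤ l → l < P.N →
      Scalt k l = P.cQ k l + (Φt l)ᵀ * P.cR k l * Φt l
        + (P.cA k l + P.cB k l * Φt l)ᵀ * Scalt k (l + 1) * (P.cA k l + P.cB k l * Φt l)
        + ∑ i : Fin p, ∑ j : Fin p,
            P.Δ l i j • ((P.cC i k l + P.cD i k l * Φt l)ᵀ * St k (l + 1)
              * (P.cC j k l + P.cD j k l * Φt l)))
    (hUt : ∀ k l, k < P.N → k ≤ l → l < P.N →
      Ut k l = (P.cA k l + P.cB k l * Φt l) * Ut k (l + 1)) :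
    (∀ k l, k < P.N → k ≤ l → l ≤ P.N → (St k l).PosSemidef ∧ (Scalt k l).PosSemidef) ∧
    (∀ k, k < P.N → (Obb k).PosDef) ∧
    (∀ k l, k < P.N → k ≤ l → l < P.N →
      St k l = P.Q k l + (Lt l)ᵀ * Odag l * P.R k l * Odag l * Lt l
        + (P.A k l - P.B k l * (Odag l * Lt l))ᵀ * St k (l + 1)
            * (P.A k l - P.B k l * (Odag l * Lt l))
        + ∑ i : Fin p, ∑ j : Fin p,
            P.Δ l i j • ((P.C i k l - P.D i k l * (Odag l * Lt l))ᵀ * St k (l + 1)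
              * (P.C j k l - P.D j k l * (Odag l * Lt l))) ∧
      Scalt k l = P.cQ k l + (Lt l)ᵀ * Odag l * P.cR k l * Odag l * Lt l
        + (P.cA k l - P.cB k l * (Odag l * Lt l))ᵀ * Scalt k (l + 1)
            * (P.cA k l - P.cB k l * (Odag l * Lt l))
        + ∑ i : Fin p, ∑ j : Fin p,
            P.Δ l i j • ((P.cC i k l - P.cD i k l * (Odag l * Lt l))ᵀ * St k (l + 1)
              * (P.cC j k l - P.cD j k l * (Odag l * Lt l)))) :=
  tilde_recursion_positivity_general P hΔ hH St Scalt Ut Obb Odag Lt Φt hMP hterm hObb hΦt hSt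
    hScalt

end TILQ
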